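/- Let M be a model of the theory of substitutions 𝕊 and let A be an element of sort (ty, k) (a type over a context of length k). Then the assignment a ↦ (v_{k,k-1}(ft_k(A)), ..., v_{k,0}(ft_k(A)), a) is a bijection between the set of terms a ∈ M_{(tm,k)} with ty_k(a) = A and the set of morphisms f : ft_k(A) → A in the associated category satisfying p_A ∘ f = id_{ft_k(A)} (i.e., sections of the projection p_A). -/

import Mathlib

universe u

/-- Iterated `ft`, lowering a context of length `k` to one of length `m ≤ k`. -/
def ftLe' {Ctx : ℕ → Type u} (ft : ∀ n, Ctx (n + 1) → Ctx n) :
    ∀ {k m : ℕ}, m ≤ k → Ctx k → Ctx m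
  | 0, 0, _, A => A
  | k + 1, m, h, A =>
    if hm : m = k + 1 then cast (congrArg Ctx hm.symm) A
    else ftLe' ft (by omega) (ft k A)

/-- A model of the partial Horn theory of substitutions `𝕊`: sorts `(ctx, n)` and `(tm, n)`
(with `(ty, n) := (ctx, n+1)`), operations `*`, `ft`, `ty`, variables `v_{n,i}` and full
substitution `subst_{p,n,k}` (a partial operation, represented using `Part`), subject to the
axioms of `𝕊`. -/
structure SubModel : Type (u + 1) where
  Ctx : ℕ → Type u
  Tm : ℕ → Type u
  star : Ctx 0
  ctx_zero_unique : ∀ A : Ctx 0, A = star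
  ft : ∀ n, Ctx (n + 1) → Ctx n
  ty : ∀ n, Tm n → Ctx (n + 1)
  v : ∀ n i, i < n → Ctx n → Tm n
  substTy : ∀ n k, Ctx n → Ctx (k + 1) → (Fin k → Tm n) → Part (Ctx (n + 1))
  substTm : ∀ n k, Ctx n → Tm k → (Fin k → Tm n) → Part (Tm n)
  -- the axioms are stated below, after the auxiliary definitions
  ax_def_substTy : ∀ n k (B : Ctx n) (A : Ctx (k + 1)) (a : Fin k → Tm n),
    (substTy n k B A a).Dom ↔
      ∀ i : Fin k, ty n (a i) ∈ substTy n i B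
        (ftLe' ft (Nat.succ_le_of_lt i.isLt) (ft k A))
        (fun j => a (Fin.castLE (le_of_lt i.isLt) j))
  ax_def_substTm : ∀ n k (B : Ctx n) (b : Tm k) (a : Fin k → Tm n),
    (substTm n k B b a).Dom ↔
      ∀ i : Fin k, ty n (a i) ∈ substTy n i B
        (ftLe' ft (Nat.succ_le_of_lt i.isLt) (ft k (ty k b)))
        (fun j => a (Fin.castLE (le_of_lt i.isLt) j))
  ax_type_var : ∀ n i (h : i < n) (A : Ctx n),
    ty n (v n i h A) ∈ substTy n (n - i - 1) A
      (ftLe' ft (by omega) A)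
      (fun j => v n (n - 1 - j) (by omega) A)
  ax_type_substTy : ∀ n k B A a C, C ∈ substTy n k B A a → ft n C = B
  ax_type_substTm : ∀ n k (B : Ctx n) (b : Tm k) (a : Fin k → Tm n),
    (substTm n k B b a).map (ty n) = substTy n k B (ty k b) a
  ax_subst_var_ty : ∀ n (A : Ctx (n + 1)),
    substTy n n (ft n A) A (fun j => v n (n - 1 - j) (by omega) (ft n A)) = Part.some A
  ax_subst_var_tm : ∀ n (b : Tm n),
    substTm n n (ft n (ty n b)) b
      (fun j => v n (n - 1 - j) (by omega) (ft n (ty n b))) = Part.some b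
  ax_var_subst : ∀ n k (B : Ctx n) (A : Ctx k) (a : Fin k → Tm n)
    (_ : ∀ i : Fin k, ty n (a i) ∈ substTy n i B
        (ftLe' ft (Nat.succ_le_of_lt i.isLt) A)
        (fun j => a (Fin.castLE (le_of_lt i.isLt) j)))
    (i : ℕ) (h : i < k),
    substTm n k B (v k i h A) a = Part.some (a ⟨k - i - 1, by omega⟩)
  ax_subst_subst_tm : ∀ n k m (C : Ctx n) (B : Ctx k) (b : Fin k → Tm n)
    (a : Fin m → Tm k) (t : Tm m)
    (_ : ∀ i : Fin k, ty n (b i) ∈ substTy n i C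
        (ftLe' ft (Nat.succ_le_of_lt i.isLt) B)
        (fun j => b (Fin.castLE (le_of_lt i.isLt) j)))
    (_ : ∀ i : Fin m, ty k (a i) ∈ substTy k i B
        (ftLe' ft (Nat.succ_le_of_lt i.isLt) (ft m (ty m t)))
        (fun j => a (Fin.castLE (le_of_lt i.isLt) j)))
    (s : Tm k) (_ : s ∈ substTm k m B t a)
    (c : Fin m → Tm n) (_ : ∀ i, c i ∈ substTm n k C (a i) b),
    substTm n k C s b = substTm n m C t c
  ax_subst_subst_ty : ∀ n k m (C : Ctx n) (B : Ctx k) (b : Fin k → Tm n)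
    (a : Fin m → Tm k) (A : Ctx (m + 1))
    (_ : ∀ i : Fin k, ty n (b i) ∈ substTy n i C
        (ftLe' ft (Nat.succ_le_of_lt i.isLt) B)
        (fun j => b (Fin.castLE (le_of_lt i.isLt) j)))
    (_ : ∀ i : Fin m, ty k (a i) ∈ substTy k i B
        (ftLe' ft (Nat.succ_le_of_lt i.isLt) (ft m A))
        (fun j => a (Fin.castLE (le_of_lt i.isLt) j)))
    (A' : Ctx (k + 1)) (_ : A' ∈ substTy k m B A a)
    (c : Fin m → Tm n) (_ : ∀ i, c i ∈ substTm n k C (a i) b),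
    substTy n k C A' b = substTy n m C A c


namespace SubModel

variable (M : SubModel.{u})

/-- The `Hom` predicate of `𝕊`: the tuple `(a_1, …, a_k)` is a morphism `B → A` of the
associated category, i.e. each `a_i` has the type obtained by substituting `a_1, …, a_{i-1}`
into the `i`-th component of `A`. -/
def Hom (n k : ℕ) (B : M.Ctx n) (A : M.Ctx k) (a : Fin k → M.Tm n) : Prop :=
  ∀ i : Fin k, M.ty n (a i) ∈ M.substTy n i B
    (ftLe' M.ft (Nat.succ_le_of_lt i.isLt) A)
    (fun j => a (Fin.castLE (le_of_lt i.isLt) j))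

/-- The identity morphism `id_A = (v_{n,n-1}(A), …, v_{n,0}(A))`. -/
def idTuple {n : ℕ} (A : M.Ctx n) : Fin n → M.Tm n :=
  fun j => M.v n (n - 1 - j) (by omega) A

/-- The projection `p_A = (v_{n+1,n}(A), …, v_{n+1,1}(A)) : A → ft(A)`. -/
def pTuple {n : ℕ} (A : M.Ctx (n + 1)) : Fin n → M.Tm (n + 1) :=
  fun j => M.v (n + 1) (n - j) (by omega) A

/-- `f : ft(A) → A` is a section of the projection `p_A`: it is a morphism and
`p_A ∘ f = id_{ft(A)}` (composition is componentwise substitution). -/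
def IsSection {k : ℕ} (A : M.Ctx (k + 1)) (f : Fin (k + 1) → M.Tm k) : Prop :=
  M.Hom k (k + 1) (M.ft k A) A f ∧
  ∀ j : Fin k, M.substTm k (k + 1) (M.ft k A) (M.pTuple A j) f =
    Part.some (M.idTuple (M.ft k A) j)

/-- The map `φ(a) = (v_{k,k-1}(ft A), …, v_{k,0}(ft A), a)`. -/
def phi {k : ℕ} (A : M.Ctx (k + 1)) (a : M.Tm k) : Fin (k + 1) → M.Tm k :=
  fun j => if h : (j : ℕ) < k then M.v k (k - 1 - j) (by omega) (M.ft k A) else a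

end SubModel

/-
A section `f : ft A → A` of `p_A` has `p_A ∘ f = (f_1, …, f_k)`, because substituting into a
variable picks out a component; so the first `k` components of a section are the identity
tuple of `ft A`, and `f` is determined by its last component `a`. By the substitution axiom
`A[v_{k-1}, …, v_0] = A`, the morphism condition on that last component says exactly
`ty a = A`, while the other components form the identity, which is always a morphism.
-/

theorem ftLe'_succ {Ctx : ℕ → Type u} (ft : ∀ n, Ctx (n + 1) → Ctx n) {k m : ℕ}
    (h : m ≤ k) (h' : m ≤ k + 1) (A : Ctx (k + 1)) :
    ftLe' ft h' A = ftLe' ft h (ft k A) := by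
  rw [ftLe', dif_neg (by omega)]

theorem ftLe'_self {Ctx : ℕ → Type u} (ft : ∀ n, Ctx (n + 1) → Ctx n) {k : ℕ}
    (h : k + 1 ≤ k + 1) (A : Ctx (k + 1)) :
    ftLe' ft h A = A := by
  rw [ftLe', dif_pos rfl]
  rfl

namespace SubModel

variable (M : SubModel.{u})

theorem hom_succ_iff {n k : ℕ} (B : M.Ctx n) (A : M.Ctx (k + 1)) (f : Fin (k + 1) → M.Tm n) :
    M.Hom n (k + 1) B A f ↔
      M.Hom n k B (M.ft k A) (Fin.init f) ∧
        M.ty n (f (Fin.last k)) ∈ M.substTy n k B A (Fin.init f) := by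
  rw [Hom, Fin.forall_fin_succ', Hom]
  refine and_congr (forall_congr' fun i => ?_) ?_
  · rw [ftLe'_succ M.ft (Nat.succ_le_of_lt i.isLt)]
    rfl
  · rw [ftLe'_self]
    rfl

theorem hom_idTuple {n : ℕ} (A : M.Ctx n) : M.Hom n n A A (M.idTuple A) := by
  intro i
  -- the index `n - (n - 1 - i) - 1` of `ax_type_var` cannot be rewritten to `i` in place
  have key : ∀ m (hm : m = n - (n - 1 - i) - 1) (h : m + 1 ≤ n),
      M.ty n (M.idTuple A i) ∈
        M.substTy n m A (ftLe' M.ft h A) (M.idTuple A ∘ Fin.castLE (Nat.le_of_succ_le h)) := by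
    rintro _ rfl _
    exact M.ax_type_var n (n - 1 - i) (by omega) A
  exact key i (by omega) _

theorem substTm_pTuple {m n : ℕ} {B : M.Ctx m} {A : M.Ctx (n + 1)} {f : Fin (n + 1) → M.Tm m}
    (hf : M.Hom m (n + 1) B A f) (j : Fin n) :
    M.substTm m (n + 1) B (M.pTuple A j) f = Part.some (f j.castSucc) := by
  rw [pTuple, M.ax_var_subst m (n + 1) B A f hf]
  congr 3
  omega

theorem isSection_iff {k : ℕ} (A : M.Ctx (k + 1)) (f : Fin (k + 1) → M.Tm k) :
    M.IsSection A f ↔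
      M.Hom k (k + 1) (M.ft k A) A f ∧ Fin.init f = M.idTuple (M.ft k A) := by
  refine and_congr_right fun hf => ?_
  simp only [M.substTm_pTuple hf, Part.some_inj, funext_iff, Fin.init]

theorem phi_eq_snoc {k : ℕ} (A : M.Ctx (k + 1)) (a : M.Tm k) :
    M.phi A a = Fin.snoc (α := fun _ => M.Tm k) (M.idTuple (M.ft k A)) a := by
  funext j
  simp only [phi, Fin.snoc, idTuple]
  split_ifs <;> rfl

theorem isSection_phi_iff {k : ℕ} (A : M.Ctx (k + 1)) (a : M.Tm k) :
    M.IsSection A (M.phi A a) ↔ M.ty k a = A := by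
  have subst_id : M.substTy k k (M.ft k A) A (M.idTuple (M.ft k A)) = Part.some A :=
    M.ax_subst_var_ty k A
  rw [isSection_iff, hom_succ_iff, phi_eq_snoc, Fin.init_snoc, Fin.snoc_last, subst_id,
    Part.mem_some_iff]
  simp only [hom_idTuple, and_true, true_and]

theorem phi_injective {k : ℕ} (A : M.Ctx (k + 1)) : Function.Injective (M.phi A) := by
  intro a b h
  simpa only [phi_eq_snoc, Fin.snoc_last] using congrFun h (Fin.last k)

theorem eq_phi_of_isSection {k : ℕ} {A : M.Ctx (k + 1)} {f : Fin (k + 1) → M.Tm k}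
    (hf : M.IsSection A f) : f = M.phi A (f (Fin.last k)) := by
  rw [phi_eq_snoc, ← ((M.isSection_iff A f).1 hf).2, Fin.snoc_init_self]

end SubModel

/-- For a model `M` of the theory of substitutions `𝕊` and a type
`A ∈ M_{(ty,k)}`, the assignment `a ↦ (v_{k,k-1}(ft A), …, v_{k,0}(ft A), a)` is a bijection
between the terms `a` with `ty(a) = A` and the sections of the projection `p_A`. -/
theorem submodel_terms_biject_with_sections (M : SubModel.{u}) (k : ℕ)
    (A : M.Ctx (k + 1)) :
    Set.BijOn (M.phi A) { a : M.Tm k | M.ty k a = A }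
      { f : Fin (k + 1) → M.Tm k | M.IsSection A f } := by
  refine ⟨fun a ha => (M.isSection_phi_iff A a).2 ha, (M.phi_injective A).injOn, fun f hf => ?_⟩
  have hf_eq := M.eq_phi_of_isSection hf
  exact ⟨f (Fin.last k), (M.isSection_phi_iff A _).1 (hf_eq ▸ hf), hf_eq.symm⟩
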